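/- arXiv:2107.14067 — 2 statements merged into one kernel-verified Lean document; each statement's English description precedes it below -/
import Mathlib

section
/- Let K ⊆ ℝⁿ be a compact set with empty interior and let p : ℝⁿ → ℝⁿ be a C¹ map. Then p(K) is a compact set with empty interior. -/
/-!
Split `K` into critical points, where `det Dp = 0`, and regular points. The critical values form
a compact Lebesgue-null set, hence a nowhere dense one. Near a regular point `p` is a local
homeomorphism by the inverse function theorem, so it maps `K` intersected with a small compact
neighbourhood onto a closed set with empty interior; countably many such pieces cover the regular
part. So `p '' K` is meagre, and Baire's theorem gives it empty interior.
-/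

open Set Filter Topology MeasureTheory

theorem IsMeagre.interior_eq_empty {X : Type*} [TopologicalSpace X] [BaireSpace X] {s : Set X}
    (hs : IsMeagre s) : interior s = ∅ := by
  by_contra h
  exact not_isMeagre_of_isOpen isOpen_interior (nonempty_iff_ne_empty.2 h)
    (hs.mono interior_subset)

theorem IsMeagre.image_of_forall_nhdsWithin {X Y : Type*} [TopologicalSpace X]
    [SecondCountableTopology X] [TopologicalSpace Y] {f : X → Y} {s : Set X}
    (h : ∀ x ∈ s, ∃ t ∈ 𝓝[s] x, IsMeagre (f '' t)) : IsMeagre (f '' s) := by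
  choose! t ht hmeagre using h
  obtain ⟨c, hcs, hc, hsc⟩ := TopologicalSpace.countable_cover_nhdsWithin ht
  refine (isMeagre_biUnion hc fun x hx => hmeagre x (hcs hx)).mono ?_
  simpa only [image_iUnion₂] using image_mono hsc

theorem OpenPartialHomeomorph.interior_image_eq_empty {X Y : Type*} [TopologicalSpace X]
    [TopologicalSpace Y] (e : OpenPartialHomeomorph X Y) {s : Set X} (hse : s ⊆ e.source)
    (hs : interior s = ∅) : interior (e '' s) = ∅ := by
  have htarget : interior (e '' s) ⊆ e.target :=
    interior_subset.trans (e.image_source_eq_target ▸ image_mono hse)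
  have hopen : IsOpen (e.symm '' interior (e '' s)) :=
    e.symm.isOpen_image_of_subset_source isOpen_interior htarget
  have hsub : e.symm '' interior (e '' s) ⊆ s :=
    (image_mono interior_subset).trans (e.symm_image_image_of_subset_source hse).subset
  rw [← image_eq_empty (f := e.symm), ← subset_empty_iff, ← hs]
  exact hopen.subset_interior_iff.2 hsub

section

variable {E : Type*} [NormedAddCommGroup E] [NormedSpace ℝ E] [FiniteDimensional ℝ E]

theorem ContDiffAt.exists_openPartialHomeomorph_of_det_ne_zero {f : E → E} {x : E}
    (hf : ContDiffAt ℝ 1 f x) (hdet : (fderiv ℝ f x).det ≠ 0) :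
    ∃ e : OpenPartialHomeomorph E E, x ∈ e.source ∧ ⇑e = f := by
  have hf' : HasFDerivAt f
      ((fderiv ℝ f x).toContinuousLinearEquivOfDetNeZero hdet : E →L[ℝ] E) x := by
    simpa using (hf.differentiableAt one_ne_zero).hasFDerivAt
  exact ⟨hf.toOpenPartialHomeomorph f hf' one_ne_zero,
    hf.mem_toOpenPartialHomeomorph_source hf' one_ne_zero,
    hf.toOpenPartialHomeomorph_coe hf' one_ne_zero⟩

theorem ContDiffAt.exists_mem_nhds_isNowhereDense_image_inter {f : E → E} {x : E}
    (hf : ContDiffAt ℝ 1 f x) (hdet : (fderiv ℝ f x).det ≠ 0) {K : Set E} (hK : IsClosed K)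
    (hKi : interior K = ∅) : ∃ t ∈ 𝓝 x, IsNowhereDense (f '' (K ∩ t)) := by
  obtain ⟨e, hxe, rfl⟩ := hf.exists_openPartialHomeomorph_of_det_ne_zero hdet
  obtain ⟨t, ht, hte, htc⟩ := local_compact_nhds (e.open_source.mem_nhds hxe)
  have hKte : K ∩ t ⊆ e.source := inter_subset_right.trans hte
  refine ⟨t, ht, ?_⟩
  rw [((htc.inter_left hK).image_of_continuousOn (e.continuousOn.mono hKte)).isClosed
    |>.isNowhereDense_iff]
  exact e.interior_image_eq_empty hKte
    (subset_empty_iff.1 (hKi ▸ interior_mono inter_subset_left))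

theorem ContDiff.isNowhereDense_image_inter_det_fderiv_eq_zero [MeasurableSpace E] [BorelSpace E]
    {f : E → E} (hf : ContDiff ℝ 1 f) {K : Set E} (hK : IsCompact K) :
    IsNowhereDense (f '' (K ∩ {x | (fderiv ℝ f x).det = 0})) := by
  have hclosed : IsClosed {x | (fderiv ℝ f x).det = 0} :=
    isClosed_eq (ContinuousLinearMap.continuous_det.comp (hf.continuous_fderiv one_ne_zero))
      continuous_const
  refine .of_isClosed_null (μ := Measure.addHaar)
    ((hK.inter_right hclosed).image hf.continuous).isClosed ?_
  exact addHaar_image_eq_zero_of_det_fderivWithin_eq_zero _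
    (fun x _ => (hf.differentiable one_ne_zero x).hasFDerivAt.hasFDerivWithinAt) fun x hx => hx.2

end

theorem c1_image_compact_empty_interior (n : ℕ)
    (K : Set (EuclideanSpace ℝ (Fin n))) (hK : IsCompact K) (hKi : interior K = ∅)
    (p : EuclideanSpace ℝ (Fin n) → EuclideanSpace ℝ (Fin n)) (hp : ContDiff ℝ 1 p) :
    IsCompact (p '' K) ∧ interior (p '' K) = ∅ := by
  refine ⟨hK.image hp.continuous, ?_⟩
  have hcritical := hp.isNowhereDense_image_inter_det_fderiv_eq_zero hK
  have hregular : IsMeagre (p '' (K ∩ {x | (fderiv ℝ p x).det ≠ 0})) := by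
    refine IsMeagre.image_of_forall_nhdsWithin fun x hx => ?_
    obtain ⟨t, ht, hnd⟩ :=
      hp.contDiffAt.exists_mem_nhds_isNowhereDense_image_inter hx.2 hK.isClosed hKi
    exact ⟨K ∩ t, inter_mem (mem_of_superset self_mem_nhdsWithin inter_subset_left)
      (mem_nhdsWithin_of_mem_nhds ht), hnd.isMeagre⟩
  refine IsMeagre.interior_eq_empty ((hcritical.isMeagre.union hregular).mono ?_)
  rw [← image_union, ← inter_union_distrib_left]
  exact image_mono fun x hx => ⟨hx, em _⟩
end

section
/- Let K ⊆ ℝⁿ and A ⊆ ℝᵐ with dim̄_B(K) + dim_H(A) < m. Then for every continuous f : K → ℝᵐ and every ε > 0 there exists a polynomial mapping p : ℝⁿ → ℝᵐ such that p(x) ∉ A for all x ∈ K and max_{x ∈ K} ‖f(x) − p(x)‖ < ε. -/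
open Filter Metric Set ENNReal

/-- Smallest number of `ε`-balls needed to cover `s` (`⊤` if no finite cover exists). -/
noncomputable def coverNum {X : Type*} [PseudoMetricSpace X] (s : Set X) (ε : ℝ) : ℕ∞ :=
  sInf {m : ℕ∞ | ∃ t : Finset X, (t.card : ℕ∞) = m ∧ s ⊆ ⋃ x ∈ t, Metric.ball x ε}

/-- Upper box-counting (Minkowski) dimension. -/
noncomputable def upperBoxDim {X : Type*} [PseudoMetricSpace X] (s : Set X) : ℝ≥0∞ :=
  Filter.limsup
    (fun ε : ℝ =>
      if coverNum s ε = ⊤ then (⊤ : ℝ≥0∞)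
      else ENNReal.ofReal (Real.log ((coverNum s ε).toNat) / Real.log ε⁻¹))
    (nhdsWithin 0 (Set.Ioi 0))

/-!
Approximate `f` within `ε / 2` by a polynomial map `q` (Stone–Weierstrass). As a Lipschitz image
of `K`, the set `B = q '' K` is covered by `O(ρ ^ (-t))` balls of radius `ρ` for every
`t > dim̄_B K`. Cover `A` by sets `U i` of diameters at most `r i` with `∑ r i ^ s` small, where
`s > dim_H A`; each `U i - B` is covered by `O(r i ^ (-t))` balls of radius `2 r i`, so
`μH[s + t] (A - B) = 0` and `dim_H (A - B) ≤ s + t < m`. Hence `A - B` has dense complement, and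
for `v ∉ A - B` with `‖v‖ < ε / 2` the polynomial map `q + v` stays `ε`-close to `f` and avoids `A`
on `K`.
-/

open Topology NNReal MeasureTheory Pointwise

universe u

section BoxCounting

variable {X Y : Type*} [PseudoMetricSpace X] [PseudoMetricSpace Y]

/-- The constant `C` makes this notion stable under Lipschitz images. -/
def BoxCountingBound (s : Set X) (t : ℝ) : Prop :=
  ∃ C : ℝ, ∀ᶠ ρ in 𝓝[>] 0, ∃ G : Finset X, s ⊆ ⋃ y ∈ G, ball y ρ ∧ (G.card : ℝ) ≤ C * ρ ^ (-t)

theorem exists_finset_card_eq_coverNum {s : Set X} {ε : ℝ} (h : coverNum s ε ≠ ⊤) :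
    ∃ F : Finset X, (F.card : ℕ∞) = coverNum s ε ∧ s ⊆ ⋃ x ∈ F, ball x ε := by
  have hne : {m : ℕ∞ | ∃ F : Finset X, (F.card : ℕ∞) = m ∧ s ⊆ ⋃ x ∈ F, ball x ε}.Nonempty := by
    by_contra hempty
    exact h (by rw [coverNum, not_nonempty_iff_eq_empty.mp hempty]; exact sInf_empty)
  exact csInf_mem hne

theorem boxCountingBound_of_upperBoxDim_lt {s : Set X} {t : ℝ}
    (h : upperBoxDim s < ENNReal.ofReal t) : BoxCountingBound s t := by
  refine ⟨1, ?_⟩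
  filter_upwards [eventually_lt_of_limsup_lt h, Ioo_mem_nhdsGT one_pos] with ε hε ⟨hε0, hε1⟩
  split_ifs at hε with htop
  · simp at hε
  obtain ⟨F, hF, hcover⟩ := exists_finset_card_eq_coverNum htop
  refine ⟨F, hcover, ?_⟩
  rw [← hF, ENat.toNat_natCast, ENNReal.ofReal_lt_ofReal_iff',
    div_lt_iff₀ (Real.log_pos ((one_lt_inv₀ hε0).mpr hε1))] at hε
  rw [one_mul, Real.rpow_neg hε0.le, ← Real.inv_rpow hε0.le]
  rcases Nat.eq_zero_or_pos F.card with hzero | hpos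
  · rw [hzero, Nat.cast_zero]
    positivity
  exact ((Real.lt_rpow_iff_log_lt (by exact_mod_cast hpos) (inv_pos.mpr hε0)).mpr hε.1).le

theorem exists_finset_image_cover_of_lipschitzOn {K D : Set X} {f : X → Y} (hKD : K ⊆ D)
    {L : ℝ≥0} (hf : LipschitzOnWith L f D) {ε : ℝ} (F : Finset X)
    (hF : K ⊆ ⋃ x ∈ F, ball x ε) :
    ∃ G : Finset Y, f '' K ⊆ ⋃ y ∈ G, ball y ((2 * L + 1) * ε) ∧ G.card ≤ F.card := by
  classical
  let g : X → X := fun x => if h : (K ∩ ball x ε).Nonempty then h.choose else x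
  refine ⟨F.image (f ∘ g), ?_, Finset.card_image_le⟩
  rintro _ ⟨z, hz, rfl⟩
  obtain ⟨x, hxF, hzx⟩ := by simpa using hF hz
  have hne : (K ∩ ball x ε).Nonempty := ⟨z, hz, hzx⟩
  have hgx : g x ∈ K ∩ ball x ε := by simpa only [g, dif_pos hne] using hne.choose_spec
  have hzg : dist z (g x) < 2 * ε := by
    linarith [dist_triangle_right z (g x) x, mem_ball.mp hzx, mem_ball.mp hgx.2]
  refine mem_biUnion (Finset.mem_coe.mpr (Finset.mem_image_of_mem _ hxF)) ?_
  calc dist (f z) (f (g x)) ≤ L * dist z (g x) := hf.dist_le_mul z (hKD hz) (g x) (hKD hgx.1)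
    _ ≤ L * (2 * ε) := by gcongr
    _ < (2 * L + 1) * ε := by linarith [pos_of_mem_ball hzx]

theorem BoxCountingBound.image_of_lipschitzOn {s : Set X} {t : ℝ} {f : X → Y} {L : ℝ≥0}
    (hf : LipschitzOnWith L f s) (hs : BoxCountingBound s t) : BoxCountingBound (f '' s) t := by
  obtain ⟨C, hC⟩ := hs
  set c : ℝ := 2 * L + 1
  have hc : 0 < c := by positivity
  have hscale : Tendsto (fun ρ => ρ / c) (𝓝[>] 0) (𝓝[>] 0) :=
    ((continuous_id.div_const c).tendsto' 0 0 (zero_div c)).inf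
      (tendsto_principal_principal.mpr fun ρ hρ => div_pos hρ hc)
  refine ⟨C * c ^ t, ?_⟩
  filter_upwards [hscale.eventually hC, self_mem_nhdsWithin] with ρ ⟨F, hF, hFcard⟩ hρ
  obtain ⟨G, hG, hGcard⟩ := exists_finset_image_cover_of_lipschitzOn subset_rfl hf F hF
  refine ⟨G, by rwa [mul_div_cancel₀ _ hc.ne'] at hG, ?_⟩
  calc (G.card : ℝ) ≤ F.card := by exact_mod_cast hGcard
    _ ≤ C * (ρ / c) ^ (-t) := hFcard
    _ = C * c ^ t * ρ ^ (-t) := by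
      rw [Real.div_rpow hρ.le hc.le, Real.rpow_neg hc.le, div_inv_eq_mul]
      ring

theorem exists_subset_closedBall_of_ediam_le [Nonempty X] {U : Set X} {r : ℝ} (hr : 0 ≤ r)
    (hU : ediam U ≤ ENNReal.ofReal r) : ∃ x, U ⊆ closedBall x r := by
  rcases U.eq_empty_or_nonempty with hempty | ⟨x, hx⟩
  · exact ⟨Classical.arbitrary X, hempty ▸ empty_subset _⟩
  · exact ⟨x, fun y hy => (edist_le_ofReal hr).mp ((edist_le_ediam_of_mem hy hx).trans hU)⟩

theorem ediam_closedBall_le_ofReal (x : X) (ρ : ℝ) :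
    ediam (closedBall x ρ) ≤ ENNReal.ofReal (2 * ρ) :=
  ediam_le_of_forall_dist_le fun y hy z hz => by
    linarith [dist_triangle_right y z x, mem_closedBall.mp hy, mem_closedBall.mp hz]

theorem sum_ediam_closedBall_rpow_le {ι : Type*} (G : Finset ι) (c : ι → X) {C r s t : ℝ}
    (hr : 0 < r) (hs : 0 ≤ s) (ht : 0 ≤ t) (hG : (G.card : ℝ) ≤ C * r ^ (-t)) :
    ∑ y ∈ G, ediam (closedBall (c y) (2 * r)) ^ (s + t) ≤
      ENNReal.ofReal (C * 4 ^ (s + t)) * ENNReal.ofReal r ^ s := by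
  refine (Finset.sum_le_card_nsmul _ _ _ fun y _ =>
    ENNReal.rpow_le_rpow (ediam_closedBall_le_ofReal _ _) (by positivity)).trans ?_
  rw [nsmul_eq_mul, show (2 : ℝ) * (2 * r) = 4 * r by ring,
    ENNReal.ofReal_rpow_of_nonneg (by positivity) (by positivity),
    ENNReal.ofReal_rpow_of_nonneg hr.le hs, ← ENNReal.ofReal_natCast,
    ← ENNReal.ofReal_mul' (by positivity), ← ENNReal.ofReal_mul' (by positivity)]
  apply ENNReal.ofReal_le_ofReal
  calc G.card * (4 * r) ^ (s + t) ≤ C * r ^ (-t) * (4 * r) ^ (s + t) := by gcongr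
    _ = C * 4 ^ (s + t) * (r ^ (-t) * r ^ (s + t)) := by
        rw [Real.mul_rpow (by norm_num) hr.le]; ring
    _ = C * 4 ^ (s + t) * r ^ s := by rw [← Real.rpow_add hr]; ring_nf

end BoxCounting

section HausdorffNull

variable {X : Type u} [EMetricSpace X] [MeasurableSpace X] [BorelSpace X]

theorem hausdorffMeasure_eq_zero_of_forall_cover {d : ℝ} {S : Set X}
    (h : ∀ δ : ℝ, 0 < δ → ∀ η : ℝ≥0∞, 0 < η → ∃ (ι : Type u) (_ : Countable ι) (V : ι → Set X),
      S ⊆ ⋃ i, V i ∧ (∀ i, ediam (V i) ≤ ENNReal.ofReal δ) ∧ ∑' i, ediam (V i) ^ d ≤ η) :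
    μH[d] S = 0 := by
  have hpos : ∀ k : ℕ, (0 : ℝ) < 1 / (k + 1) := fun k => by positivity
  choose ι hι V hSV hdiam hsum using fun k : ℕ =>
    h _ (hpos k) (ENNReal.ofReal (1 / (k + 1))) (ENNReal.ofReal_pos.mpr (hpos k))
  have hlim : Tendsto (fun k : ℕ => ENNReal.ofReal (1 / (k + 1))) atTop (𝓝 0) := by
    simpa using ENNReal.tendsto_ofReal tendsto_one_div_add_atTop_nhds_zero_nat
  refine le_antisymm ?_ zero_le
  calc μH[d] S ≤ liminf (fun k => ∑' i, ediam (V k i) ^ d) atTop :=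
        Measure.hausdorffMeasure_le_liminf_tsum d S _ hlim V (.of_forall hdiam) (.of_forall hSV)
    _ ≤ liminf (fun k : ℕ => ENNReal.ofReal (1 / (k + 1))) atTop :=
        liminf_le_liminf (.of_forall hsum)
    _ = 0 := hlim.liminf_eq

theorem exists_cover_of_hausdorffMeasure_eq_zero {d : ℝ} (hd : 0 < d) {S : Set X}
    (hS : μH[d] S = 0) {δ η : ℝ≥0∞} (hδ : 0 < δ) (hη : 0 < η) :
    ∃ U : ℕ → Set X, S ⊆ ⋃ n, U n ∧ (∀ n, ediam (U n) ≤ δ) ∧ ∑' n, ediam (U n) ^ d < η := by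
  simp only [Measure.hausdorffMeasure_apply, ENNReal.iSup_eq_zero] at hS
  have hlt := (hS δ hδ).symm ▸ hη
  simp only [iInf_lt_iff] at hlt
  obtain ⟨U, hcov, hdiam, hsum⟩ := hlt
  refine ⟨U, hcov, hdiam, lt_of_le_of_lt (ENNReal.tsum_le_tsum fun n => ?_) hsum⟩
  rcases (U n).eq_empty_or_nonempty with hempty | hne
  · simp [hempty, ENNReal.zero_rpow_of_pos hd]
  · exact (iSup_pos (f := fun _ : (U n).Nonempty => ediam (U n) ^ d) hne).ge

end HausdorffNull

/-- A piece of diameter `a = 0` still needs a ball of positive radius `r`; its cost `r ^ s` is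
kept below `e`. -/
theorem exists_radius_ge_rpow_le_add {a : ℝ≥0∞} {r₀ : ℝ} (hr₀ : 0 < r₀)
    (ha : a ≤ ENNReal.ofReal r₀) {s : ℝ} (hs : 0 < s) {e : ℝ≥0} (he : 0 < e) :
    ∃ r : ℝ, 0 < r ∧ r ≤ r₀ ∧ a ≤ ENNReal.ofReal r ∧ ENNReal.ofReal r ^ s ≤ a ^ s + e := by
  rcases eq_or_ne a 0 with rfl | ha0
  · refine ⟨min r₀ ((e : ℝ) ^ s⁻¹), lt_min hr₀ (by positivity), min_le_left _ _, zero_le, ?_⟩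
    rw [ENNReal.zero_rpow_of_pos hs, zero_add, ENNReal.ofReal_rpow_of_nonneg (by positivity) hs.le]
    calc ENNReal.ofReal (min r₀ ((e : ℝ) ^ s⁻¹) ^ s) ≤ ENNReal.ofReal (((e : ℝ) ^ s⁻¹) ^ s) :=
          ENNReal.ofReal_le_ofReal (Real.rpow_le_rpow (by positivity) (min_le_right _ _) hs.le)
      _ = e := by
          rw [← Real.rpow_mul e.coe_nonneg, inv_mul_cancel₀ hs.ne', Real.rpow_one,
            ENNReal.ofReal_coe_nnreal]
  · have hfin : a ≠ ⊤ := ne_top_of_le_ne_top ENNReal.ofReal_ne_top ha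
    refine ⟨a.toReal, ENNReal.toReal_pos ha0 hfin, ENNReal.toReal_le_of_le_ofReal hr₀.le ha, ?_⟩
    rw [ENNReal.ofReal_toReal hfin]
    exact ⟨le_rfl, le_self_add⟩

theorem sub_subset_iUnion_sigma_closedBall {E ι : Type*} [SeminormedAddCommGroup E]
    {U : ι → Set E} {B : Set E} {x : ι → E} {r : ι → ℝ} {G : ι → Finset E}
    (hU : ∀ i, U i ⊆ closedBall (x i) (r i)) (hG : ∀ i, B ⊆ ⋃ y ∈ G i, ball y (r i)) :
    (⋃ i, U i) - B ⊆ ⋃ p : Σ i, G i, closedBall (x p.1 - p.2) (2 * r p.1) := by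
  rintro _ ⟨a, ha, b, hb, rfl⟩
  obtain ⟨i, hai⟩ := mem_iUnion.mp ha
  obtain ⟨y, hy, hby⟩ := mem_iUnion₂.mp (hG i hb)
  refine mem_iUnion.mpr ⟨⟨i, y, hy⟩, mem_closedBall.mpr ?_⟩
  linarith [dist_sub_sub_le a b (x i) y, mem_closedBall.mp (hU i hai), mem_ball.mp hby]

section Difference

variable {E : Type u} [NormedAddCommGroup E] [MeasurableSpace E] [BorelSpace E]

theorem hausdorffMeasure_sub_eq_zero {A B : Set E} {s t : ℝ} (hs : 0 < s) (ht : 0 ≤ t)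
    (hA : μH[s] A = 0) (hB : BoxCountingBound B t) : μH[s + t] (A - B) = 0 := by
  obtain ⟨C, hC⟩ := hB
  obtain ⟨ρ₀, hρ₀, hcov⟩ := mem_nhdsGT_iff_exists_Ioc_subset.mp hC
  set M := ENNReal.ofReal (C * 4 ^ (s + t))
  refine hausdorffMeasure_eq_zero_of_forall_cover fun δ hδ η hη => ?_
  obtain ⟨η', hη'pos, hη'⟩ := ENNReal.exists_nnreal_pos_mul_lt
    (ENNReal.mul_ne_top ENNReal.ofNat_ne_top ENNReal.ofReal_ne_top : 2 * M ≠ ⊤) hη.ne'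
  obtain ⟨e, he, hesum⟩ :=
    ENNReal.exists_pos_sum_of_countable (ENNReal.coe_ne_zero.mpr hη'pos.ne') ℕ
  set r₀ := min ρ₀ (δ / 4)
  have hr₀ : 0 < r₀ := lt_min hρ₀ (by positivity)
  obtain ⟨U, hAU, hUdiam, hUsum⟩ := exists_cover_of_hausdorffMeasure_eq_zero hs hA
    (ENNReal.ofReal_pos.mpr hr₀) (ENNReal.coe_pos.mpr hη'pos)
  have hpiece : ∀ n, ∃ (x : E) (r : ℝ) (G : Finset E), 0 < r ∧ r ≤ r₀ ∧ U n ⊆ closedBall x r ∧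
      ENNReal.ofReal r ^ s ≤ ediam (U n) ^ s + e n ∧ B ⊆ ⋃ y ∈ G, ball y r ∧
      (G.card : ℝ) ≤ C * r ^ (-t) := by
    intro n
    obtain ⟨r, hr, hrr₀, hUr, hrs⟩ := exists_radius_ge_rpow_le_add hr₀ (hUdiam n) hs (he n)
    obtain ⟨G, hG⟩ := hcov ⟨hr, hrr₀.trans (min_le_left _ _)⟩
    obtain ⟨x, hx⟩ := exists_subset_closedBall_of_ediam_le hr.le hUr
    exact ⟨x, r, G, hr, hrr₀, hx, hrs, hG⟩
  choose x r G hr hrr₀ hUx hrs hGcov hGcard using hpiece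
  refine ⟨Σ n, G n, inferInstance, fun p => closedBall (x p.1 - p.2) (2 * r p.1),
    (sub_subset_sub_right hAU).trans (sub_subset_iUnion_sigma_closedBall hUx hGcov),
    fun p => ?_, ?_⟩
  · calc ediam _ ≤ ENNReal.ofReal (2 * (2 * r p.1)) := ediam_closedBall_le_ofReal _ _
      _ ≤ ENNReal.ofReal δ :=
          ENNReal.ofReal_le_ofReal (by linarith [hrr₀ p.1, min_le_right ρ₀ (δ / 4)])
  · calc ∑' p : Σ n, G n, ediam (closedBall (x p.1 - p.2) (2 * r p.1)) ^ (s + t)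
        = ∑' n, ∑ y ∈ G n, ediam (closedBall (x n - y) (2 * r n)) ^ (s + t) := by
          rw [ENNReal.tsum_sigma']
          exact tsum_congr fun n =>
            Finset.tsum_subtype (G n) fun y => ediam (closedBall (x n - y) (2 * r n)) ^ (s + t)
      _ ≤ ∑' n, M * (ediam (U n) ^ s + e n) := ENNReal.tsum_le_tsum fun n =>
          (sum_ediam_closedBall_rpow_le _ _ (hr n) hs.le ht (hGcard n)).trans
            (by gcongr; exact hrs n)
      _ = M * (∑' n, ediam (U n) ^ s + ∑' n, (e n : ℝ≥0∞)) := by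
          rw [ENNReal.tsum_mul_left, ENNReal.tsum_add]
      _ ≤ M * (η' + η') := by gcongr
      _ = η' * (2 * M) := by ring
      _ ≤ η := hη'.le

theorem dimH_sub_le {A B : Set E} {s t : ℝ} (hA : dimH A < ENNReal.ofReal s)
    (hB : BoxCountingBound B t) (ht : 0 ≤ t) : dimH (A - B) ≤ ENNReal.ofReal (s + t) := by
  have hs : 0 < s := ENNReal.ofReal_pos.mp (pos_of_gt hA)
  have hAnull : μH[s] A = 0 := by
    simpa [Real.coe_toNNReal s hs.le] using hausdorffMeasure_of_dimH_lt (d := s.toNNReal) hA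
  refine dimH_le_of_hausdorffMeasure_ne_top (d := (s + t).toNNReal) ?_
  rw [Real.coe_toNNReal _ (by positivity), hausdorffMeasure_sub_eq_zero hs ht hAnull hB]
  exact ENNReal.zero_ne_top

end Difference

section Polynomial

variable {ι κ : Type*}

noncomputable def polyMap (p : κ → MvPolynomial ι ℝ) (x : EuclideanSpace ℝ ι) :
    EuclideanSpace ℝ κ :=
  WithLp.toLp 2 fun i => MvPolynomial.eval x (p i)

theorem polyMap_add_C (p : κ → MvPolynomial ι ℝ) (v : EuclideanSpace ℝ κ)
    (x : EuclideanSpace ℝ ι) :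
    polyMap (fun i => p i + MvPolynomial.C (v i)) x = polyMap p x + v := by
  ext i; simp [polyMap]

theorem MvPolynomial.contDiff_eval [Fintype ι] (p : MvPolynomial ι ℝ) {k : WithTop ℕ∞} :
    ContDiff ℝ k fun x : EuclideanSpace ℝ ι => MvPolynomial.eval x p := by
  induction p using MvPolynomial.induction_on with
  | C a => simpa using contDiff_const
  | add p q hp hq => simpa using hp.add hq
  | mul_X p i hp => simpa using hp.mul (EuclideanSpace.proj i).contDiff

theorem contDiff_polyMap [Fintype ι] [Fintype κ] (p : κ → MvPolynomial ι ℝ) {k : WithTop ℕ∞} :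
    ContDiff ℝ k (polyMap p) :=
  contDiff_piLp' 2 fun i => (p i).contDiff_eval

theorem exists_mvPolynomial_near [Fintype ι] {K : Set (EuclideanSpace ℝ ι)} (hK : IsCompact K)
    {g : EuclideanSpace ℝ ι → ℝ} (hg : ContinuousOn g K) {ε : ℝ} (hε : 0 < ε) :
    ∃ p : MvPolynomial ι ℝ, ∀ x ∈ K, |g x - MvPolynomial.eval x p| < ε := by
  have : CompactSpace K := isCompact_iff_compactSpace.mp hK
  let coord : ι → C(K, ℝ) := fun i => ⟨fun z => (z : EuclideanSpace ℝ ι) i, by fun_prop⟩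
  have heval (q : MvPolynomial ι ℝ) (z : K) :
      MvPolynomial.aeval coord q z = MvPolynomial.eval (z : EuclideanSpace ℝ ι) q := by
    induction q using MvPolynomial.induction_on with
    | C a => simp
    | add p q hp hq => simp [hp, hq]
    | mul_X p i hp => simp [hp, coord]
  have hsep : (MvPolynomial.aeval (R := ℝ) coord).range.SeparatesPoints := by
    intro z w hzw
    obtain ⟨i, hi⟩ : ∃ i, (z : EuclideanSpace ℝ ι) i ≠ (w : EuclideanSpace ℝ ι) i := by
      by_contra! h
      exact hzw (Subtype.ext (PiLp.ext h))
    exact ⟨coord i, ⟨coord i, ⟨MvPolynomial.X i, MvPolynomial.aeval_X _ _⟩, rfl⟩, hi⟩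
  obtain ⟨⟨_, q, rfl⟩, hq⟩ := ContinuousMap.exists_mem_subalgebra_near_continuous_of_separatesPoints
    _ hsep (K.domRestrict g) hg.domRestrict ε hε
  exact ⟨q, fun x hx => by simpa [heval, abs_sub_comm, Set.domRestrict_apply] using hq ⟨x, hx⟩⟩

theorem exists_polyMap_near [Fintype ι] [Fintype κ] {K : Set (EuclideanSpace ℝ ι)}
    (hK : IsCompact K) {f : EuclideanSpace ℝ ι → EuclideanSpace ℝ κ} (hf : ContinuousOn f K)
    {ε : ℝ} (hε : 0 < ε) :
    ∃ p : κ → MvPolynomial ι ℝ, ∀ x ∈ K, ‖f x - polyMap p x‖ < ε := by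
  obtain ⟨δ, hδ, hsmall⟩ := Metric.continuousAt_iff.mp
    (PiLp.continuous_toLp 2 fun _ : κ => ℝ).continuousAt ε hε
  choose p hp using fun i =>
    exists_mvPolynomial_near hK ((EuclideanSpace.proj i).continuous.comp_continuousOn hf) hδ
  refine ⟨p, fun x hx => ?_⟩
  have hdiff : f x - polyMap p x = WithLp.toLp 2 fun i => f x i - MvPolynomial.eval x (p i) := by
    ext i; simp [polyMap]
  have hcoord : dist (fun i => f x i - MvPolynomial.eval x (p i)) 0 < δ := by
    rw [dist_zero_right, pi_norm_lt_iff hδ]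
    exact fun i => hp i x hx
  simpa [hdiff] using hsmall hcoord

end Polynomial

theorem exists_lt_ofReal_lt_ofReal_of_add_lt {a b : ℝ≥0∞} {c : ℝ} (h : a + b < ENNReal.ofReal c) :
    ∃ s t : ℝ, a < ENNReal.ofReal s ∧ b < ENNReal.ofReal t ∧ s + t < c := by
  have ha : a ≠ ⊤ := ne_top_of_lt (le_self_add.trans_lt h)
  have hb : b ≠ ⊤ := ne_top_of_lt (le_add_self.trans_lt h)
  have hc : a.toReal + b.toReal < c := by
    rw [← ENNReal.toReal_add ha hb]
    exact ENNReal.toReal_lt_of_lt_ofReal h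
  obtain ⟨d, hd, hdc⟩ : ∃ d : ℝ, 0 < d ∧ a.toReal + b.toReal + 2 * d < c :=
    ⟨(c - a.toReal - b.toReal) / 3, by linarith, by linarith⟩
  refine ⟨a.toReal + d, b.toReal + d, ?_, ?_, by linarith⟩
  · rw [ENNReal.lt_ofReal_iff_toReal_lt ha]; linarith
  · rw [ENNReal.lt_ofReal_iff_toReal_lt hb]; linarith

theorem weierstrass_avoids_small_dim (n m : ℕ)
    (K : Set (EuclideanSpace ℝ (Fin n))) (hK : IsCompact K)
    (A : Set (EuclideanSpace ℝ (Fin m)))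
    (hdim : upperBoxDim K + dimH A < (m : ℝ≥0∞))
    (f : EuclideanSpace ℝ (Fin n) → EuclideanSpace ℝ (Fin m)) (hf : ContinuousOn f K)
    (ε : ℝ) (hε : 0 < ε) :
    ∃ p : Fin m → MvPolynomial (Fin n) ℝ,
      (∀ x ∈ K, (show EuclideanSpace ℝ (Fin m) from WithLp.toLp 2 (fun i => MvPolynomial.eval x (p i))) ∉ A) ∧
      ∀ x ∈ K,
        ‖f x - (show EuclideanSpace ℝ (Fin m) from WithLp.toLp 2 (fun i => MvPolynomial.eval x (p i)))‖ < ε := by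
  rw [← ENNReal.ofReal_natCast] at hdim
  obtain ⟨t, s, hKt, hAs, hts⟩ := exists_lt_ofReal_lt_ofReal_of_add_lt hdim
  have ht : 0 < t := ENNReal.ofReal_pos.mp (pos_of_gt hKt)
  have hs : 0 < s := ENNReal.ofReal_pos.mp (pos_of_gt hAs)
  obtain ⟨q, hq⟩ := exists_polyMap_near hK hf (half_pos hε)
  obtain ⟨L, hL⟩ := LocallyLipschitzOn.exists_lipschitzOnWith_of_compact hK
    (contDiff_polyMap q (k := 1)).locallyLipschitz.locallyLipschitzOn
  have hbad : dimH (A - polyMap q '' K) < Module.finrank ℝ (EuclideanSpace ℝ (Fin m)) := by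
    refine (dimH_sub_le hAs ((boxCountingBound_of_upperBoxDim_lt hKt).image_of_lipschitzOn hL)
      ht.le).trans_lt ?_
    rw [finrank_euclideanSpace_fin, ← ENNReal.ofReal_natCast,
      ENNReal.ofReal_lt_ofReal_iff_of_nonneg (by positivity)]
    linarith
  obtain ⟨v, hvA, hv⟩ := (dense_compl_of_dimH_lt_finrank hbad).exists_mem_open isOpen_ball
    ⟨0, mem_ball_self (half_pos hε)⟩
  refine ⟨fun i => q i + MvPolynomial.C (v i), fun x hx hxA => hvA ?_, fun x hx => ?_⟩
  · change polyMap _ x ∈ A at hxA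
    rw [polyMap_add_C] at hxA
    exact ⟨_, hxA, _, mem_image_of_mem _ hx, add_sub_cancel_left _ _⟩
  · change ‖f x - polyMap _ x‖ < ε
    rw [polyMap_add_C, ← sub_sub]
    calc ‖f x - polyMap q x - v‖ ≤ ‖f x - polyMap q x‖ + ‖v‖ := norm_sub_le _ _
      _ < ε / 2 + ε / 2 := add_lt_add (hq x hx) (mem_ball_zero_iff.mp hv)
      _ = ε := add_halves ε
end
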